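/- arXiv:2304.13856 — 6 statements merged into one kernel-verified Lean document; each statement's English description precedes it below -/
import Mathlib

section
/- For an incomplete matching π of [n] and any admissible linear order φ on its pairings, the total crossing number Cr(π) := Σ_{V∈p(π)} Cr_φ(V) is independent of the choice of φ, where for V={i,j} (i<j), Cr_φ(V) := (j−i−1) − |{U={k,l}∈p(π): k<i<l<j, U<_φ V}| − |{U={k,l}∈p(π): i<k<j<l, U<_φ V}|. Explicitly, Cr(π) = Σ_{{i,j}∈p(π)} |{{k}∈s(π): i<k<j}| + 2·|{(U,V): U,V∈p(π), V<U nested}| + |{({i,j},{k,l}) pairings: i<k<j<l}|. -/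
open scoped Classical

noncomputable def lo (V : Finset ℕ) : ℕ := WithTop.untopD 0 V.min
noncomputable def hi (V : Finset ℕ) : ℕ := WithBot.unbotD 0 V.max

/-- `π` is an incomplete matching of `[n] = {1,…,n}`. -/
def IsIM (n : ℕ) (π : Finset (Finset ℕ)) : Prop :=
  (∀ B ∈ π, B.card = 1 ∨ B.card = 2) ∧
  (∀ B ∈ π, ∀ C ∈ π, B ≠ C → Disjoint B C) ∧
  π.biUnion id = Finset.Icc 1 n

/-- The pair blocks of `π`. -/
noncomputable def pairsOf (π : Finset (Finset ℕ)) : Finset (Finset ℕ) :=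
  π.filter (fun B => B.card = 2)

/-- The elements of `[n]` lying in a singleton block of `π`. -/
noncomputable def singsOf (π : Finset (Finset ℕ)) : Finset ℕ :=
  (π.filter (fun B => B.card = 1)).biUnion id

/-!
For a pairing `V = {i, j}` the `j - i - 1` points strictly between `i` and `j` are covered by the
blocks of `π`: every singleton inside `V` contributes one of them, every pairing nested in `V` two,
and every pairing crossing `V` one. So `Cr_φ(V)` counts the singletons and pairings nested in `V`
plus the pairings crossing `V` that do not precede `V` in `φ`. Summing over `V`, every crossing
pair is counted exactly once, at its `φ`-smaller member, whatever the linear order `φ`.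
-/

open Finset

lemma card_biUnion_id_inter {α : Type*} [DecidableEq α] {s : Finset (Finset α)}
    (h : (s : Set (Finset α)).PairwiseDisjoint id) (t : Finset α) :
    #(s.biUnion id ∩ t) = ∑ B ∈ s, #(B ∩ t) := by
  rw [biUnion_inter, card_biUnion (h.mono fun _ => inter_subset_left)]
  rfl

lemma sum_card_filter_eq_card_filter_product {α β : Type*} (s : Finset α) (t : Finset β)
    (p : α → β → Prop) [∀ a b, Decidable (p a b)] :
    ∑ b ∈ t, #{a ∈ s | p a b} = #{q ∈ s ×ˢ t | p q.1 q.2} := by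
  simp only [card_filter, sum_product_right]

lemma card_filter_and_add_card_filter_and_not {α : Type*} (s : Finset α) (p q : α → Prop)
    [DecidablePred p] [DecidablePred q] :
    #{a ∈ s | p a ∧ q a} + #{a ∈ s | p a ∧ ¬ q a} = #{a ∈ s | p a} := by
  rw [← card_filter_add_card_filter_not (s := {a ∈ s | p a}) q, filter_filter, filter_filter]

lemma sum_card_filter_and_not_add_swap {α : Type*} (P : Finset α) (c r : α → α → Prop)
    [DecidableRel c] [DecidableRel r] (hirrefl : ∀ U ∈ P, ¬ c U U)
    (hasym : ∀ V ∈ P, ∀ U ∈ P, r V U → ¬ r U V)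
    (htot : ∀ V ∈ P, ∀ U ∈ P, V ≠ U → r V U ∨ r U V) :
    ∑ V ∈ P, (#{U ∈ P | c U V ∧ ¬ r U V} + #{U ∈ P | c V U ∧ ¬ r U V})
      = ∑ V ∈ P, #{U ∈ P | c U V} := by
  simp only [card_filter, sum_add_distrib]
  rw [sum_comm (s := P) (t := P) (f := fun V U => if c V U ∧ ¬ r U V then 1 else 0),
    ← sum_add_distrib]
  refine sum_congr rfl fun V hV => ?_
  rw [← sum_add_distrib]
  refine sum_congr rfl fun U hU => ?_
  by_cases hc : c U V
  · have hne : U ≠ V := by rintro rfl; exact hirrefl U hU hc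
    rcases htot U hU V hV hne with h | h
    · simp [hc, h, hasym U hU V hV h]
    · simp [hc, h, hasym V hV U hU h]
  · simp [hc]

lemma lo_eq_min' {V : Finset ℕ} (h : V.Nonempty) : lo V = V.min' h := by
  rw [lo, ← coe_min' h, WithTop.untopD_coe]

lemma hi_eq_max' {V : Finset ℕ} (h : V.Nonempty) : hi V = V.max' h := by
  rw [hi, ← coe_max' h, WithBot.unbotD_coe]

lemma lo_mem {V : Finset ℕ} (h : V.Nonempty) : lo V ∈ V :=
  lo_eq_min' h ▸ min'_mem V h

lemma hi_mem {V : Finset ℕ} (h : V.Nonempty) : hi V ∈ V :=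
  hi_eq_max' h ▸ max'_mem V h

lemma lo_lt_hi {V : Finset ℕ} (h : #V = 2) : lo V < hi V := by
  have hV : V.Nonempty := card_pos.mp (by omega)
  rw [lo_eq_min' hV, hi_eq_max' hV]
  exact min'_lt_max'_of_card V (by omega)

lemma eq_pair_lo_hi {V : Finset ℕ} (h : #V = 2) : V = {lo V, hi V} := by
  have hV : V.Nonempty := card_pos.mp (by omega)
  refine (eq_of_subset_of_card_le ?_ ?_).symm
  · exact insert_subset (lo_mem hV) (singleton_subset_iff.mpr (hi_mem hV))
  · rw [h, card_pair (lo_lt_hi h).ne]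

lemma card_inter_eq_of_card_eq_two {U : Finset ℕ} (hU : #U = 2) (s : Finset ℕ) :
    #(U ∩ s) = (if lo U ∈ s then 1 else 0) + (if hi U ∈ s then 1 else 0) := by
  rw [← filter_mem_eq_inter, card_filter]
  conv_lhs => rw [eq_pair_lo_hi hU]
  exact sum_pair (lo_lt_hi hU).ne

lemma card_inter_Ioo_lo_hi {U V : Finset ℕ} (hU : #U = 2) (hV : #V = 2)
    (hUV : U = V ∨ Disjoint U V) :
    #(U ∩ Ioo (lo V) (hi V)) =
      2 * (if lo V < lo U ∧ hi U < hi V then 1 else 0)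
        + (if lo V < lo U ∧ lo U < hi V ∧ hi V < hi U then 1 else 0)
        + (if lo U < lo V ∧ lo V < hi U ∧ hi U < hi V then 1 else 0) := by
  have hltU := lo_lt_hi hU
  rw [card_inter_eq_of_card_eq_two hU]
  simp only [mem_Ioo]
  rcases hUV with rfl | hd
  · simp
  · have hUne : U.Nonempty := card_pos.mp (by omega)
    have hVne : V.Nonempty := card_pos.mp (by omega)
    have hne := disjoint_iff_ne.mp hd
    have := hne _ (lo_mem hUne) _ (lo_mem hVne)
    have := hne _ (lo_mem hUne) _ (hi_mem hVne)
    have := hne _ (hi_mem hUne) _ (lo_mem hVne)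
    have := hne _ (hi_mem hUne) _ (hi_mem hVne)
    split_ifs <;> omega

lemma sum_eq_sum_singletons_add_sum_pairsOf {M : Type*} [AddCommMonoid M]
    {π : Finset (Finset ℕ)} (h : ∀ B ∈ π, #B = 1 ∨ #B = 2) (g : Finset ℕ → M) :
    ∑ B ∈ π, g B = ∑ B ∈ π.filter (fun B => #B = 1), g B + ∑ B ∈ pairsOf π, g B := by
  rw [← sum_filter_add_sum_filter_not π (fun B => #B = 1), pairsOf]
  congr 2
  refine filter_congr fun B hB => ?_
  rcases h B hB with h | h <;> simp [h]

lemma Ioo_lo_hi_subset {n : ℕ} {π : Finset (Finset ℕ)} (hπ : IsIM n π) {V : Finset ℕ}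
    (hV : V ∈ π) (hVne : V.Nonempty) : Ioo (lo V) (hi V) ⊆ π.biUnion id := by
  have hhi : hi V ∈ Icc 1 n := hπ.2.2 ▸ mem_biUnion.mpr ⟨V, hV, hi_mem hVne⟩
  rw [hπ.2.2]
  intro x hx
  simp only [mem_Ioo, mem_Icc] at hx hhi ⊢
  omega

lemma hi_sub_lo_sub_one_eq {n : ℕ} {π : Finset (Finset ℕ)} (hπ : IsIM n π) {V : Finset ℕ}
    (hV : V ∈ pairsOf π) :
    hi V - lo V - 1 =
      #{k ∈ singsOf π | lo V < k ∧ k < hi V}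
        + 2 * #{U ∈ pairsOf π | lo V < lo U ∧ hi U < hi V}
        + #{U ∈ pairsOf π | lo V < lo U ∧ lo U < hi V ∧ hi V < hi U}
        + #{U ∈ pairsOf π | lo U < lo V ∧ lo V < hi U ∧ hi U < hi V} := by
  obtain ⟨hcard, hdisj, -⟩ := id hπ
  obtain ⟨hVπ, hV2⟩ := mem_filter.mp hV
  have hdisj' : (π : Set (Finset ℕ)).PairwiseDisjoint id := fun B hB C hC => hdisj B hB C hC
  set I := Ioo (lo V) (hi V) with hI
  have hsings : #{k ∈ singsOf π | lo V < k ∧ k < hi V}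
      = ∑ B ∈ π.filter (fun B => #B = 1), #(B ∩ I) := by
    rw [← card_biUnion_id_inter (hdisj'.subset (filter_subset _ _)), ← filter_mem_eq_inter]
    simp only [singsOf, hI, mem_Ioo]
  have hpairs : ∑ U ∈ pairsOf π, #(U ∩ I)
      = 2 * #{U ∈ pairsOf π | lo V < lo U ∧ hi U < hi V}
        + #{U ∈ pairsOf π | lo V < lo U ∧ lo U < hi V ∧ hi V < hi U}
        + #{U ∈ pairsOf π | lo U < lo V ∧ lo V < hi U ∧ hi U < hi V} := by
    simp only [card_filter, mul_sum, ← sum_add_distrib]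
    refine sum_congr rfl fun U hU => ?_
    obtain ⟨hUπ, hU2⟩ := mem_filter.mp hU
    exact card_inter_Ioo_lo_hi hU2 hV2 (eq_or_ne U V |>.imp_right (hdisj U hUπ V hVπ))
  calc hi V - lo V - 1 = #I := (Nat.card_Ioo _ _).symm
    _ = ∑ B ∈ π, #(B ∩ I) := by
      have hVne : V.Nonempty := card_pos.mp (by omega)
      rw [← card_biUnion_id_inter hdisj', inter_eq_right.mpr (Ioo_lo_hi_subset hπ hVπ hVne)]
    _ = _ := by rw [sum_eq_sum_singletons_add_sum_pairsOf hcard, hsings, hpairs]; ring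

lemma hi_sub_lo_sub_one_sub_card_crossing_eq {n : ℕ} {π : Finset (Finset ℕ)} (hπ : IsIM n π)
    (r : Finset ℕ → Finset ℕ → Prop) {V : Finset ℕ} (hV : V ∈ pairsOf π) :
    (hi V - lo V - 1) -
        (#{U ∈ pairsOf π | lo U < lo V ∧ lo V < hi U ∧ hi U < hi V ∧ r U V}
          + #{U ∈ pairsOf π | lo V < lo U ∧ lo U < hi V ∧ hi V < hi U ∧ r U V})
      = #{k ∈ singsOf π | lo V < k ∧ k < hi V}
        + 2 * #{U ∈ pairsOf π | lo V < lo U ∧ hi U < hi V}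
        + (#{U ∈ pairsOf π | (lo U < lo V ∧ lo V < hi U ∧ hi U < hi V) ∧ ¬ r U V}
          + #{U ∈ pairsOf π | (lo V < lo U ∧ lo U < hi V ∧ hi V < hi U) ∧ ¬ r U V}) := by
  have hleft := card_filter_and_add_card_filter_and_not (pairsOf π)
    (fun U => lo U < lo V ∧ lo V < hi U ∧ hi U < hi V) (fun U => r U V)
  have hright := card_filter_and_add_card_filter_and_not (pairsOf π)
    (fun U => lo V < lo U ∧ lo U < hi V ∧ hi V < hi U) (fun U => r U V)
  have := hi_sub_lo_sub_one_eq hπ hV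
  simp only [and_assoc] at hleft hright ⊢
  omega

theorem crossing_number_independent_general (n : ℕ) (π : Finset (Finset ℕ)) (hπ : IsIM n π)
    (r : Finset ℕ → Finset ℕ → Prop)
    (hasym : ∀ V ∈ pairsOf π, ∀ U ∈ pairsOf π, r V U → ¬ r U V)
    (htot : ∀ V ∈ pairsOf π, ∀ U ∈ pairsOf π, V ≠ U → r V U ∨ r U V) :
    (∑ V ∈ pairsOf π,
        ((hi V - lo V - 1) -
          (((pairsOf π).filter
              (fun U => lo U < lo V ∧ lo V < hi U ∧ hi U < hi V ∧ r U V)).card +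
            ((pairsOf π).filter
              (fun U => lo V < lo U ∧ lo U < hi V ∧ hi V < hi U ∧ r U V)).card)))
      =
      (∑ V ∈ pairsOf π, ((singsOf π).filter (fun k => lo V < k ∧ k < hi V)).card)
        + 2 * (((pairsOf π) ×ˢ (pairsOf π)).filter
            (fun q => lo q.2 < lo q.1 ∧ hi q.1 < hi q.2)).card
        + (((pairsOf π) ×ˢ (pairsOf π)).filter
            (fun q => lo q.1 < lo q.2 ∧ lo q.2 < hi q.1 ∧ hi q.1 < hi q.2)).card := by
  rw [sum_congr rfl fun V hV => hi_sub_lo_sub_one_sub_card_crossing_eq hπ r hV,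
    sum_add_distrib, sum_add_distrib, ← mul_sum,
    sum_card_filter_and_not_add_swap (pairsOf π)
      (fun U V => lo U < lo V ∧ lo V < hi U ∧ hi U < hi V) r (fun U _ h => by omega) hasym htot,
    sum_card_filter_eq_card_filter_product (pairsOf π) (pairsOf π),
    sum_card_filter_eq_card_filter_product (pairsOf π) (pairsOf π)]

/-- For any admissible linear order `r` on the pairings of an incomplete matching `π`
(a strict linear order extending the nested order), the total crossing number
`Cr(π) = Σ_V Cr_r(V)` (with
`Cr_r(V) = (j−i−1) − |{U={k,l} : k<i<l<j, U <_r V}| − |{U={k,l} : i<k<j<l, U <_r V}|`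
for `V = {i,j}`, `i<j`) is independent of `r`: it always equals
`Σ_{{i,j}∈p(π)} |{singletons k : i<k<j}| + 2·|{(U,V) : V<U nested}|
 + |{({i,j},{k,l}) : i<k<j<l}|`. -/
theorem crossing_number_independent (n : ℕ) (π : Finset (Finset ℕ)) (hπ : IsIM n π)
    (r : Finset ℕ → Finset ℕ → Prop)
    (hasym : ∀ V ∈ pairsOf π, ∀ U ∈ pairsOf π, r V U → ¬ r U V)
    (htot : ∀ V ∈ pairsOf π, ∀ U ∈ pairsOf π, V ≠ U → r V U ∨ r U V)
    (htrans : ∀ V ∈ pairsOf π, ∀ U ∈ pairsOf π, ∀ Z ∈ pairsOf π,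
      r V U → r U Z → r V Z)
    (hext : ∀ V ∈ pairsOf π, ∀ U ∈ pairsOf π, lo V < lo U → hi U < hi V → r V U) :
    (∑ V ∈ pairsOf π,
        ((hi V - lo V - 1) -
          (((pairsOf π).filter
              (fun U => lo U < lo V ∧ lo V < hi U ∧ hi U < hi V ∧ r U V)).card +
            ((pairsOf π).filter
              (fun U => lo V < lo U ∧ lo U < hi V ∧ hi V < hi U ∧ r U V)).card)))
      =
      (∑ V ∈ pairsOf π, ((singsOf π).filter (fun k => lo V < k ∧ k < hi V)).card)
        + 2 * (((pairsOf π) ×ˢ (pairsOf π)).filter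
            (fun q => lo q.2 < lo q.1 ∧ hi q.1 < hi q.2)).card
        + (((pairsOf π) ×ˢ (pairsOf π)).filter
            (fun q => lo q.1 < lo q.2 ∧ lo q.2 < hi q.1 ∧ hi q.1 < hi q.2)).card :=
  crossing_number_independent_general n π hπ r hasym htot
end

section
/- The decomposition map DCP is a bijection from {(π,k) : π ∈ P_{1,2}(n), {k} ∈ s(π)} onto dcp(n) := {(π^m, k, σ^l, σ^r) : π^m ∈ P_{1,2}(n), k ∈ ∩p(π^m), σ^l ∈ P_{1,2}(|s^k_l(π^m)|), σ^r ∈ P_{1,2}(|s^k_r(π^m)|)}, where DCP(π,k) = (π^m, k, σ^l, σ^r): π^m is the incomplete matching whose pairs are exactly the pairs {i,j} of π with i<k<j (all other points singletons), s^k_l(π^m) (resp. s^k_r(π^m)) are the singletons of π^m strictly left (resp. right) of k, and σ^l, σ^r are the matchings induced on these sets by the remaining pairs of π, relabeled order-preservingly. -/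
open scoped Classical

/-- The singletons of `ρ` strictly to the left of `k`. -/
noncomputable def singLeft (ρ : Finset (Finset ℕ)) (k : ℕ) : Finset ℕ :=
  ((ρ.filter (fun B => B.card = 1)).biUnion id).filter (· < k)

/-- The singletons of `ρ` strictly to the right of `k`. -/
noncomputable def singRight (ρ : Finset (Finset ℕ)) (k : ℕ) : Finset ℕ :=
  ((ρ.filter (fun B => B.card = 1)).biUnion id).filter (k < ·)

/-- The decomposition `DCP(π,k) = (π^m, k, σ^l, σ^r)`: `π^m` keeps exactly the pairs of
`π` straddling `k` (all other points become singletons); `σ^l` (resp. `σ^r`) is the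
matching induced by the remaining pairs of `π` on the singletons of `π^m` to the left
(resp. right) of `k`, relabeled order-preservingly. -/
noncomputable def DCPfun (n : ℕ) (p : Finset (Finset ℕ) × ℕ) :
    Finset (Finset ℕ) × ℕ × Finset (Finset ℕ) × Finset (Finset ℕ) :=
  let π := p.1
  let k := p.2
  let strad := π.filter (fun B => B.card = 2 ∧ lo B < k ∧ k < hi B)
  let covered := strad.biUnion id
  let πm := strad ∪ ((Finset.Icc 1 n \ covered).image (fun m => ({m} : Finset ℕ)))
  let Sl := (Finset.Icc 1 n \ covered).filter (· < k)
  let Sr := (Finset.Icc 1 n \ covered).filter (k < ·)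
  (πm, k,
    (π.filter (fun B => B ⊆ Sl)).image
      (fun B => B.image (fun m => (Sl.filter (· ≤ m)).card)),
    (π.filter (fun B => B ⊆ Sr)).image
      (fun B => B.image (fun m => (Sr.filter (· ≤ m)).card)))

/-!
Let `π` be a matching with `{k}` as a block. A block with points on both sides of `k` is a pair
straddling `k`, so every block of `π` is `{k}`, a straddling pair, or lies entirely among the
points left (or right) of `k` not covered by straddling pairs. Hence `π` is recovered from
`DCP(π, k)` by gluing the pairs of `π^m`, the block `{k}`, and `σˡ`, `σʳ` transported back along
the order-preserving relabellings. Conversely, for `(π^m, k, σˡ, σʳ) ∈ dcp(n)`, the point `k` is a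
singleton of `π^m` and the glued matching has exactly the pairs of `π^m` straddling `k`, so `DCP`
returns the quadruple.
-/

open Finset

-- `IsIM n π` is `IsMatchingOn (Icc 1 n) π` by definition, and is used as such below.
def IsMatchingOn {α : Type*} [DecidableEq α] (T : Finset α) (π : Finset (Finset α)) : Prop :=
  (∀ B ∈ π, #B = 1 ∨ #B = 2) ∧ (∀ B ∈ π, ∀ C ∈ π, B ≠ C → Disjoint B C) ∧ π.biUnion id = T

def singles {α : Type*} [DecidableEq α] (π : Finset (Finset α)) : Finset α :=
  {B ∈ π | #B = 1}.biUnion id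

theorem singleton_mem_of_mem_singles {α : Type*} [DecidableEq α] {π : Finset (Finset α)} {a : α}
    (ha : a ∈ singles π) : {a} ∈ π := by
  obtain ⟨B, hB, haB⟩ := mem_biUnion.mp ha
  obtain ⟨hB, hB1⟩ := mem_filter.mp hB
  obtain ⟨b, rfl⟩ := card_eq_one.mp hB1
  rwa [mem_singleton.mp haB]

namespace IsMatchingOn

variable {α β : Type*} [DecidableEq α] [DecidableEq β] {T S : Finset α}
  {π ρ : Finset (Finset α)} {B C : Finset α} {a : α}

theorem nonempty (h : IsMatchingOn T π) (hB : B ∈ π) : B.Nonempty := by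
  rw [← card_pos]
  rcases h.1 B hB with h | h <;> omega

theorem subset (h : IsMatchingOn T π) (hB : B ∈ π) : B ⊆ T :=
  h.2.2 ▸ subset_biUnion_of_mem id hB

theorem exists_mem (h : IsMatchingOn T π) (ha : a ∈ T) : ∃ B ∈ π, a ∈ B := by
  rw [← h.2.2] at ha
  simpa using ha

theorem eq_of_mem_of_mem (h : IsMatchingOn T π) (hB : B ∈ π) (hC : C ∈ π) (haB : a ∈ B)
    (haC : a ∈ C) : B = C := by
  by_contra hne
  exact disjoint_left.mp (h.2.1 B hB C hC hne) haB haC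

theorem union (h : IsMatchingOn T π) (h' : IsMatchingOn S ρ) (hTS : Disjoint T S) :
    IsMatchingOn (T ∪ S) (π ∪ ρ) := by
  refine ⟨fun B hB => ?_, fun B hB C hC hne => ?_, by rw [union_biUnion, h.2.2, h'.2.2]⟩
  · rcases mem_union.mp hB with hB | hB
    exacts [h.1 B hB, h'.1 B hB]
  · rcases mem_union.mp hB with hB | hB <;> rcases mem_union.mp hC with hC | hC
    · exact h.2.1 B hB C hC hne
    · exact hTS.mono (h.subset hB) (h'.subset hC)
    · exact hTS.symm.mono (h'.subset hB) (h.subset hC)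
    · exact h'.2.1 B hB C hC hne

theorem singletons (T : Finset α) : IsMatchingOn T (T.image singleton) := by
  refine ⟨fun B hB => ?_, fun B hB C hC hne => ?_, ?_⟩
  · obtain ⟨a, -, rfl⟩ := mem_image.mp hB
    exact Or.inl (card_singleton a)
  · obtain ⟨a, -, rfl⟩ := mem_image.mp hB
    obtain ⟨b, -, rfl⟩ := mem_image.mp hC
    exact disjoint_singleton.mpr fun hab => hne (hab ▸ rfl)
  · rw [image_biUnion]
    exact biUnion_singleton_eq_self

theorem filter (h : IsMatchingOn T π) (p : Finset α → Prop) [DecidablePred p] :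
    IsMatchingOn ({B ∈ π | p B}.biUnion id) {B ∈ π | p B} :=
  ⟨fun B hB => h.1 B (mem_of_mem_filter B hB),
    fun B hB C hC => h.2.1 B (mem_of_mem_filter B hB) C (mem_of_mem_filter C hC), rfl⟩

theorem image {f : α → β} (h : IsMatchingOn T π) (hf : Set.InjOn f T) :
    IsMatchingOn (T.image f) (π.image (Finset.image f)) := by
  refine ⟨fun B' hB' => ?_, fun B' hB' C' hC' hne => ?_, ?_⟩
  · obtain ⟨B, hB, rfl⟩ := mem_image.mp hB'
    rw [card_image_of_injOn (hf.mono (by exact_mod_cast h.subset hB))]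
    exact h.1 B hB
  · obtain ⟨B, hB, rfl⟩ := mem_image.mp hB'
    obtain ⟨C, hC, rfl⟩ := mem_image.mp hC'
    have hBC := h.2.1 B hB C hC fun hBC => hne (hBC ▸ rfl)
    refine disjoint_left.mpr fun x hxB hxC => ?_
    obtain ⟨b, hb, rfl⟩ := mem_image.mp hxB
    obtain ⟨c, hc, hcb⟩ := mem_image.mp hxC
    rw [hf (h.subset hC hc) (h.subset hB hb) hcb] at hc
    exact disjoint_left.mp hBC hb hc
  · rw [image_biUnion, ← h.2.2, biUnion_image]
    rfl

theorem filter_subset (h : IsMatchingOn T π) (hST : S ⊆ T)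
    (hS : ∀ B ∈ π, ∀ a ∈ B, a ∈ S → B ⊆ S) : IsMatchingOn S {B ∈ π | B ⊆ S} := by
  refine ⟨(h.filter _).1, (h.filter _).2.1, Subset.antisymm (fun a ha => ?_) fun a ha => ?_⟩
  · obtain ⟨B, hB, haB⟩ := mem_biUnion.mp ha
    exact (mem_filter.mp hB).2 haB
  · obtain ⟨B, hB, haB⟩ := h.exists_mem (hST ha)
    exact mem_biUnion.mpr ⟨B, mem_filter.mpr ⟨hB, hS B hB a haB ha⟩, haB⟩

theorem filter_subset_eq (h : IsMatchingOn T π) (h' : IsMatchingOn S ρ) (hρπ : ρ ⊆ π) :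
    {B ∈ π | B ⊆ S} = ρ := by
  ext B
  refine ⟨fun hB => ?_, fun hB => mem_filter.mpr ⟨hρπ hB, h'.subset hB⟩⟩
  obtain ⟨hB, hBS⟩ := mem_filter.mp hB
  obtain ⟨a, ha⟩ := h.nonempty hB
  obtain ⟨C, hC, haC⟩ := h'.exists_mem (hBS ha)
  rwa [h.eq_of_mem_of_mem hB (hρπ hC) ha haC]

theorem sdiff_pairs (h : IsMatchingOn T π) : T \ {B ∈ π | #B = 2}.biUnion id = singles π := by
  ext a
  simp only [singles, mem_sdiff, mem_biUnion, mem_filter, id]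
  constructor
  · rintro ⟨ha, hpair⟩
    obtain ⟨B, hB, haB⟩ := h.exists_mem ha
    exact ⟨B, ⟨hB, (h.1 B hB).resolve_right fun h2 => hpair ⟨B, ⟨hB, h2⟩, haB⟩⟩, haB⟩
  · rintro ⟨B, ⟨hB, hB1⟩, haB⟩
    refine ⟨h.subset hB haB, fun ⟨C, ⟨hC, hC2⟩, haC⟩ => ?_⟩
    rw [h.eq_of_mem_of_mem hB hC haB haC] at hB1
    omega

theorem pairs_union_singles (h : IsMatchingOn T π) :
    {B ∈ π | #B = 2} ∪ (singles π).image singleton = π := by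
  refine Subset.antisymm (union_subset (Finset.filter_subset _ _) fun B hB => ?_) fun B hB => ?_
  · obtain ⟨a, ha, rfl⟩ := mem_image.mp hB
    exact singleton_mem_of_mem_singles ha
  · rcases h.1 B hB with hB1 | hB2
    · obtain ⟨a, rfl⟩ := card_eq_one.mp hB1
      refine mem_union_right _ (mem_image_of_mem _ ?_)
      exact mem_biUnion.mpr ⟨{a}, mem_filter.mpr ⟨hB, hB1⟩, mem_singleton_self a⟩
    · exact mem_union_left _ (mem_filter.mpr ⟨hB, hB2⟩)

end IsMatchingOn

section PairsAndSingletons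

variable {α : Type*} [DecidableEq α] {A : Finset (Finset α)} {T : Finset α}

theorem filter_card_two_union_image_singleton (hA : ∀ B ∈ A, #B = 2) :
    {B ∈ A ∪ T.image singleton | #B = 2} = A := by
  rw [filter_union, filter_true_of_mem hA, filter_false_of_mem, union_empty]
  intro B hB
  obtain ⟨a, -, rfl⟩ := mem_image.mp hB
  simp

theorem singles_union_image_singleton (hA : ∀ B ∈ A, #B = 2) :
    singles (A ∪ T.image singleton) = T := by
  rw [singles, filter_union, filter_false_of_mem fun B hB => by simp [hA B hB],
    filter_true_of_mem fun B hB => ?_, empty_union, image_biUnion]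
  · exact biUnion_singleton_eq_self
  · obtain ⟨a, -, rfl⟩ := mem_image.mp hB
    exact card_singleton a

end PairsAndSingletons

section OrderRank

variable {α : Type*} [LinearOrder α]

def orderRank (S : Finset α) (a : α) : ℕ :=
  #{x ∈ S | x ≤ a}

theorem orderRank_strictMonoOn (S : Finset α) : StrictMonoOn (orderRank S) S := by
  intro a _ b hb hab
  refine card_lt_card ⟨monotone_filter_right S fun x _ hx => hx.trans hab.le, ?_⟩
  intro hsub
  have := (mem_filter.mp (hsub (mem_filter.mpr ⟨hb, le_rfl⟩))).2
  exact absurd hab (not_lt.mpr this)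

theorem orderRank_mem_Icc {S : Finset α} {a : α} (ha : a ∈ S) : orderRank S a ∈ Icc 1 #S :=
  mem_Icc.mpr
    ⟨card_pos.mpr ⟨a, mem_filter.mpr ⟨ha, le_rfl⟩⟩, card_le_card (Finset.filter_subset _ _)⟩

theorem image_orderRank (S : Finset α) : S.image (orderRank S) = Icc 1 #S :=
  eq_of_subset_of_card_le (image_subset_iff.mpr fun _ => orderRank_mem_Icc)
    (by rw [Nat.card_Icc, card_image_of_injOn (orderRank_strictMonoOn S).injOn]; omega)

theorem orderRank_bijOn (S : Finset α) : Set.BijOn (orderRank S) S (Icc 1 #S) :=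
  ⟨fun _ ha => orderRank_mem_Icc ha, (orderRank_strictMonoOn S).injOn,
    by rw [Set.SurjOn, ← coe_image, image_orderRank]⟩

end OrderRank

theorem image_image_of_leftInvOn {α β : Type*} [DecidableEq α] [DecidableEq β] {f : α → β}
    {g : β → α} {T : Finset α} {π : Finset (Finset α)} (hfg : Set.LeftInvOn g f T)
    (hπ : ∀ B ∈ π, B ⊆ T) : (π.image (image f)).image (image g) = π := by
  rw [image_image]
  refine (image_congr fun B hB => ?_).trans image_id
  simp only [Function.comp_apply, image_image, id]
  exact (image_congr (hfg.mono (by exact_mod_cast hπ B hB))).trans image_id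

section Relabel

variable {α : Type*} [LinearOrder α] {S T : Finset α} {π : Finset (Finset α)}
  {σ : Finset (Finset ℕ)}

def induced (S : Finset α) (π : Finset (Finset α)) : Finset (Finset ℕ) :=
  {B ∈ π | B ⊆ S}.image (image (orderRank S))

noncomputable def pullback [Nonempty α] (S : Finset α) (σ : Finset (Finset ℕ)) :
    Finset (Finset α) :=
  σ.image (image (Function.invFunOn (orderRank S) S))

theorem IsMatchingOn.induced (h : IsMatchingOn T π) (hST : S ⊆ T)
    (hS : ∀ B ∈ π, ∀ a ∈ B, a ∈ S → B ⊆ S) : IsMatchingOn (Icc 1 #S) (induced S π) := by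
  rw [← image_orderRank]
  exact (h.filter_subset hST hS).image (orderRank_bijOn S).injOn

variable [Nonempty α]

theorem IsMatchingOn.pullback (h : IsMatchingOn (Icc 1 #S) σ) : IsMatchingOn S (pullback S σ) := by
  have hinv := (orderRank_bijOn S).symm (orderRank_bijOn S).invOn_invFunOn.symm
  have himage : (Icc 1 #S).image (Function.invFunOn (orderRank S) S) = S :=
    coe_injective (by rw [coe_image, hinv.image_eq])
  have := h.image hinv.injOn
  rwa [himage] at this

theorem pullback_induced (S : Finset α) (π : Finset (Finset α)) :
    pullback S (induced S π) = {B ∈ π | B ⊆ S} :=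
  image_image_of_leftInvOn (orderRank_bijOn S).invOn_invFunOn.1 fun _ hB => (mem_filter.mp hB).2

theorem induced_eq_of_pullback_subset (h : IsMatchingOn T π) (hσ : IsMatchingOn (Icc 1 #S) σ)
    (hσπ : pullback S σ ⊆ π) : induced S π = σ := by
  rw [induced, h.filter_subset_eq hσ.pullback hσπ]
  exact image_image_of_leftInvOn (orderRank_bijOn S).invOn_invFunOn.2 fun _ hB => hσ.subset hB

end Relabel

section LoHi

variable {B : Finset ℕ} {m : ℕ}

theorem lo_eq_min'_s5 (h : B.Nonempty) : lo B = B.min' h := by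
  rw [lo, ← coe_min' h]
  rfl

theorem hi_eq_max'_s5 (h : B.Nonempty) : hi B = B.max' h := by
  rw [hi, ← coe_max' h]
  rfl

theorem lo_le (hm : m ∈ B) : lo B ≤ m := by
  rw [lo_eq_min'_s5 ⟨m, hm⟩]
  exact min'_le B m hm

theorem le_hi (hm : m ∈ B) : m ≤ hi B := by
  rw [hi_eq_max'_s5 ⟨m, hm⟩]
  exact le_max' B m hm

theorem lo_mem_s5 (h : B.Nonempty) : lo B ∈ B := by
  rw [lo_eq_min'_s5 h]
  exact min'_mem B h

theorem hi_mem_s5 (h : B.Nonempty) : hi B ∈ B := by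
  rw [hi_eq_max'_s5 h]
  exact max'_mem B h

theorem notMem_of_lo_lt_of_lt_hi (hB : #B = 2) (hlo : lo B < m) (hhi : m < hi B) : m ∉ B := by
  intro hm
  have : 2 < #B := two_lt_card_iff.mpr
    ⟨lo B, m, hi B, lo_mem_s5 ⟨m, hm⟩, hm, hi_mem_s5 ⟨m, hm⟩, hlo.ne, (hlo.trans hhi).ne, hhi.ne⟩
  omega

end LoHi

theorem filter_lt_union_filter_gt_union_singleton {α : Type*} [LinearOrder α] {S : Finset α}
    {k : α} (hk : k ∈ S) : {m ∈ S | m < k} ∪ {m ∈ S | k < m} ∪ {k} = S := by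
  ext m
  simp only [mem_union, mem_filter, mem_singleton]
  rcases lt_trichotomy m k with h | rfl | h
  · simp [h, h.ne, h.not_gt]
  · simp [hk]
  · simp [h, h.ne', h.not_gt]

section Decomposition

variable {n k : ℕ} {π : Finset (Finset ℕ)} {B : Finset ℕ}

theorem singLeft_eq_filter_singles (ρ : Finset (Finset ℕ)) (k : ℕ) :
    singLeft ρ k = {m ∈ singles ρ | m < k} :=
  rfl

theorem singRight_eq_filter_singles (ρ : Finset (Finset ℕ)) (k : ℕ) :
    singRight ρ k = {m ∈ singles ρ | k < m} :=
  rfl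

noncomputable def straddling (π : Finset (Finset ℕ)) (k : ℕ) : Finset (Finset ℕ) :=
  {B ∈ π | #B = 2 ∧ lo B < k ∧ k < hi B}

noncomputable def free (n : ℕ) (π : Finset (Finset ℕ)) (k : ℕ) : Finset ℕ :=
  Icc 1 n \ (straddling π k).biUnion id

noncomputable def middle (n : ℕ) (π : Finset (Finset ℕ)) (k : ℕ) : Finset (Finset ℕ) :=
  straddling π k ∪ (free n π k).image singleton

theorem DCPfun_eq (n : ℕ) (π : Finset (Finset ℕ)) (k : ℕ) :
    DCPfun n (π, k) = (middle n π k, k, induced {m ∈ free n π k | m < k} π,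
      induced {m ∈ free n π k | k < m} π) :=
  rfl

theorem card_eq_two_of_mem_straddling (hB : B ∈ straddling π k) : #B = 2 :=
  (mem_filter.mp hB).2.1

theorem isMatchingOn_middle (hπ : IsMatchingOn (Icc 1 n) π) :
    IsMatchingOn (Icc 1 n) (middle n π k) := by
  have hcover : (straddling π k).biUnion id ⊆ Icc 1 n :=
    biUnion_subset.mpr fun B hB => hπ.subset (mem_of_mem_filter B hB)
  rw [← union_sdiff_of_subset hcover]
  exact (hπ.filter _).union (.singletons _) disjoint_sdiff

theorem filter_card_two_middle : {B ∈ middle n π k | #B = 2} = straddling π k :=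
  filter_card_two_union_image_singleton fun _ => card_eq_two_of_mem_straddling

theorem singles_middle : singles (middle n π k) = free n π k :=
  singles_union_image_singleton fun _ => card_eq_two_of_mem_straddling

theorem singLeft_middle : singLeft (middle n π k) k = {m ∈ free n π k | m < k} := by
  rw [singLeft_eq_filter_singles, singles_middle]

theorem singRight_middle : singRight (middle n π k) k = {m ∈ free n π k | k < m} := by
  rw [singRight_eq_filter_singles, singles_middle]

theorem lo_lt_and_lt_hi_of_mem_middle (hB : B ∈ middle n π k) (hB2 : #B = 2) :
    lo B < k ∧ k < hi B :=
  (mem_filter.mp (filter_card_two_middle ▸ mem_filter.mpr ⟨hB, hB2⟩)).2.2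

theorem mem_straddling_or_subset_free (hπ : IsMatchingOn (Icc 1 n) π) (hk : {k} ∈ π) (hB : B ∈ π) :
    B = {k} ∨ B ∈ straddling π k ∨ B ⊆ {m ∈ free n π k | m < k} ∨
      B ⊆ {m ∈ free n π k | k < m} := by
  by_cases hBk : B = {k}
  · exact Or.inl hBk
  by_cases hBs : B ∈ straddling π k
  · exact Or.inr (Or.inl hBs)
  have hkB : k ∉ B := fun hkB => hBk (hπ.eq_of_mem_of_mem hB hk hkB (mem_singleton_self k))
  have hfree : B ⊆ free n π k := fun a ha => mem_sdiff.mpr ⟨hπ.subset hB ha, fun hac => by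
    obtain ⟨C, hC, haC⟩ := mem_biUnion.mp hac
    exact hBs (hπ.eq_of_mem_of_mem hB (mem_of_mem_filter C hC) ha haC ▸ hC)⟩
  -- a block with points on both sides of `k` would be a straddling pair
  have hside : ∀ a ∈ B, ∀ b ∈ B, a < k → b < k := by
    intro a ha b hb hak
    by_contra hbk
    have hkb : k < b := lt_of_le_of_ne (not_lt.mp hbk) fun h => hkB (h ▸ hb)
    have hcard : #B = 2 := (hπ.1 B hB).resolve_left fun h1 => by
      have := one_lt_card.mpr ⟨a, ha, b, hb, by omega⟩
      omega
    exact hBs (mem_filter.mpr ⟨hB, hcard, (lo_le ha).trans_lt hak, hkb.trans_le (le_hi hb)⟩)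
  obtain ⟨a, ha⟩ := hπ.nonempty hB
  rcases lt_or_gt_of_ne fun h : a = k => hkB (h ▸ ha) with hak | hka
  · exact Or.inr (Or.inr (Or.inl fun b hb => mem_filter.mpr ⟨hfree hb, hside a ha b hb hak⟩))
  · refine Or.inr (Or.inr (Or.inr fun b hb => mem_filter.mpr ⟨hfree hb, ?_⟩))
    refine lt_of_le_of_ne (not_lt.mp fun hbk => ?_) fun h => hkB (h ▸ hb)
    exact absurd (hside b hb a ha hbk) (not_lt.mpr hka.le)

theorem straddling_union_filter_subset_free (hπ : IsMatchingOn (Icc 1 n) π) (hk : {k} ∈ π) :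
    straddling π k ∪ ({B ∈ π | B ⊆ {m ∈ free n π k | m < k}} ∪
      {B ∈ π | B ⊆ {m ∈ free n π k | k < m}} ∪ {{k}}) = π := by
  refine Subset.antisymm (union_subset (Finset.filter_subset _ _) (union_subset
    (union_subset (Finset.filter_subset _ _) (Finset.filter_subset _ _))
    (singleton_subset_iff.mpr hk))) fun B hB => ?_
  simp only [mem_union, mem_filter, mem_singleton]
  rcases mem_straddling_or_subset_free hπ hk hB with h | h | h | h <;> simp [h, hB]

theorem subset_free_left_of_mem (hπ : IsMatchingOn (Icc 1 n) π) (hk : {k} ∈ π) :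
    ∀ B ∈ π, ∀ a ∈ B, a ∈ {m ∈ free n π k | m < k} → B ⊆ {m ∈ free n π k | m < k} := by
  intro B hB a ha haS
  obtain ⟨hafree, hak⟩ := mem_filter.mp haS
  rcases mem_straddling_or_subset_free hπ hk hB with rfl | h | h | h
  · exact absurd (mem_singleton.mp ha) hak.ne
  · exact absurd (mem_biUnion.mpr ⟨B, h, ha⟩) (mem_sdiff.mp hafree).2
  · exact h
  · exact absurd (mem_filter.mp (h ha)).2 (not_lt.mpr hak.le)

theorem subset_free_right_of_mem (hπ : IsMatchingOn (Icc 1 n) π) (hk : {k} ∈ π) :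
    ∀ B ∈ π, ∀ a ∈ B, a ∈ {m ∈ free n π k | k < m} → B ⊆ {m ∈ free n π k | k < m} := by
  intro B hB a ha haS
  obtain ⟨hafree, hka⟩ := mem_filter.mp haS
  rcases mem_straddling_or_subset_free hπ hk hB with rfl | h | h | h
  · exact absurd (mem_singleton.mp ha) hka.ne'
  · exact absurd (mem_biUnion.mpr ⟨B, h, ha⟩) (mem_sdiff.mp hafree).2
  · exact absurd (mem_filter.mp (h ha)).2 (not_lt.mpr hka.le)
  · exact h

end Decomposition

section Gluing

noncomputable def glue (k : ℕ) (ρ σl σr : Finset (Finset ℕ)) : Finset (Finset ℕ) :=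
  {B ∈ ρ | #B = 2} ∪ (pullback (singLeft ρ k) σl ∪ pullback (singRight ρ k) σr ∪ {{k}})

noncomputable def DCPinv (q : Finset (Finset ℕ) × ℕ × Finset (Finset ℕ) × Finset (Finset ℕ)) :
    Finset (Finset ℕ) × ℕ :=
  (glue q.2.1 q.1 q.2.2.1 q.2.2.2, q.2.1)

theorem DCPinv_DCPfun {n k : ℕ} {π : Finset (Finset ℕ)} (hπ : IsMatchingOn (Icc 1 n) π)
    (hk : {k} ∈ π) : DCPinv (DCPfun n (π, k)) = (π, k) := by
  simp only [DCPfun_eq, DCPinv, glue, singLeft_eq_filter_singles, singRight_eq_filter_singles,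
    filter_card_two_middle, singles_middle, pullback_induced,
    straddling_union_filter_subset_free hπ hk]

variable {n k : ℕ} {ρ σl σr : Finset (Finset ℕ)}

theorem mem_singles_of_straddled (hρ : IsMatchingOn (Icc 1 n) ρ) (hk : k ∈ Icc 1 n)
    (hst : ∀ B ∈ ρ, #B = 2 → lo B < k ∧ k < hi B) :
    k ∈ singles ρ := by
  rw [← hρ.sdiff_pairs]
  refine mem_sdiff.mpr ⟨hk, fun hkc => ?_⟩
  obtain ⟨B, hB, hkB⟩ := mem_biUnion.mp hkc
  obtain ⟨hB, hB2⟩ := mem_filter.mp hB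
  exact notMem_of_lo_lt_of_lt_hi hB2 (hst B hB hB2).1 (hst B hB hB2).2 hkB

theorem isMatchingOn_glue (hρ : IsMatchingOn (Icc 1 n) ρ) (hk : k ∈ Icc 1 n)
    (hst : ∀ B ∈ ρ, #B = 2 → lo B < k ∧ k < hi B)
    (hσl : IsMatchingOn (Icc 1 #(singLeft ρ k)) σl)
    (hσr : IsMatchingOn (Icc 1 #(singRight ρ k)) σr) :
    IsMatchingOn (Icc 1 n) (glue k ρ σl σr) := by
  have hsides : Disjoint (singLeft ρ k) (singRight ρ k) :=
    disjoint_left.mpr fun m hl hr => (mem_filter.mp hl).2.not_gt (mem_filter.mp hr).2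
  have hk_sides : Disjoint (singLeft ρ k ∪ singRight ρ k) {k} := by
    simp [singLeft, singRight]
  have hsingles : IsMatchingOn (singles ρ)
      (pullback (singLeft ρ k) σl ∪ pullback (singRight ρ k) σr ∪ {{k}}) := by
    rw [← filter_lt_union_filter_gt_union_singleton (mem_singles_of_straddled hρ hk hst)]
    exact (hσl.pullback.union hσr.pullback hsides).union (.singletons {k}) hk_sides
  have hcover : {B ∈ ρ | #B = 2}.biUnion id ⊆ Icc 1 n :=
    biUnion_subset.mpr fun B hB => hρ.subset (mem_of_mem_filter B hB)
  rw [← union_sdiff_of_subset hcover, hρ.sdiff_pairs]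
  exact (hρ.filter _).union hsingles (hρ.sdiff_pairs ▸ disjoint_sdiff)

theorem straddling_glue (hst : ∀ B ∈ ρ, #B = 2 → lo B < k ∧ k < hi B)
    (hσl : IsMatchingOn (Icc 1 #(singLeft ρ k)) σl)
    (hσr : IsMatchingOn (Icc 1 #(singRight ρ k)) σr) :
    straddling (glue k ρ σl σr) k = {B ∈ ρ | #B = 2} := by
  have hnot : ∀ B ∈ pullback (singLeft ρ k) σl ∪ pullback (singRight ρ k) σr ∪ {{k}},
      ¬(#B = 2 ∧ lo B < k ∧ k < hi B) := by
    rintro B hB ⟨hB2, hlo, hhi⟩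
    have hne : B.Nonempty := card_pos.mp (by omega)
    rcases mem_union.mp hB with hB | hB
    · rcases mem_union.mp hB with hB | hB
      · exact (mem_filter.mp (hσl.pullback.subset hB (hi_mem_s5 hne))).2.not_gt hhi
      · exact (mem_filter.mp (hσr.pullback.subset hB (lo_mem_s5 hne))).2.not_gt hlo
    · rw [mem_singleton.mp hB, card_singleton] at hB2
      omega
  rw [straddling, glue, filter_union, filter_false_of_mem hnot, union_empty]
  exact filter_true_of_mem fun B hB =>
    ⟨(mem_filter.mp hB).2, hst B (mem_of_mem_filter B hB) (mem_filter.mp hB).2⟩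

theorem DCPfun_DCPinv (hρ : IsMatchingOn (Icc 1 n) ρ) (hk : k ∈ Icc 1 n)
    (hst : ∀ B ∈ ρ, #B = 2 → lo B < k ∧ k < hi B)
    (hσl : IsMatchingOn (Icc 1 #(singLeft ρ k)) σl)
    (hσr : IsMatchingOn (Icc 1 #(singRight ρ k)) σr) :
    DCPfun n (DCPinv (ρ, k, σl, σr)) = (ρ, k, σl, σr) := by
  have hglue := isMatchingOn_glue hρ hk hst hσl hσr
  have hfree : free n (glue k ρ σl σr) k = singles ρ := by
    rw [free, straddling_glue hst hσl hσr, hρ.sdiff_pairs]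
  rw [DCPinv, DCPfun_eq, middle, hfree, straddling_glue hst hσl hσr, hρ.pairs_union_singles,
    ← singLeft_eq_filter_singles, ← singRight_eq_filter_singles,
    induced_eq_of_pullback_subset hglue hσl fun B hB => by simp [glue, hB],
    induced_eq_of_pullback_subset hglue hσr fun B hB => by simp [glue, hB]]

end Gluing

/-- `DCP` is a bijection from `{(π,k) : π ∈ P₁,₂(n), {k} ∈ s(π)}` onto
`dcp(n) = {(π^m,k,σ^l,σ^r) : π^m ∈ P₁,₂(n), k ∈ ∩p(π^m),
σ^l ∈ P₁,₂(|s^k_l(π^m)|), σ^r ∈ P₁,₂(|s^k_r(π^m)|)}`. -/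
theorem DCP_bijection (n : ℕ) :
    Set.BijOn (DCPfun n)
      {p : Finset (Finset ℕ) × ℕ | IsIM n p.1 ∧ ({p.2} : Finset ℕ) ∈ p.1}
      {q : Finset (Finset ℕ) × ℕ × Finset (Finset ℕ) × Finset (Finset ℕ) |
        IsIM n q.1 ∧ q.2.1 ∈ Finset.Icc 1 n ∧
        (∀ B ∈ q.1, B.card = 2 → lo B < q.2.1 ∧ q.2.1 < hi B) ∧
        IsIM (singLeft q.1 q.2.1).card q.2.2.1 ∧
        IsIM (singRight q.1 q.2.1).card q.2.2.2} := by
  refine Set.InvOn.bijOn (f' := DCPinv) ⟨?_, ?_⟩ ?_ ?_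
  · rintro ⟨π, k⟩ ⟨hπ, hk⟩
    exact DCPinv_DCPfun hπ hk
  · rintro ⟨ρ, k, σl, σr⟩ ⟨hρ, hk, hst, hσl, hσr⟩
    exact DCPfun_DCPinv hρ hk hst hσl hσr
  · rintro ⟨π, k⟩ ⟨hπ : IsMatchingOn (Icc 1 n) π, hk⟩
    rw [Set.mem_ofPred_eq, DCPfun_eq, singLeft_middle, singRight_middle]
    exact ⟨isMatchingOn_middle hπ, hπ.subset hk (mem_singleton_self k),
      fun B hB => lo_lt_and_lt_hi_of_mem_middle hB,
      hπ.induced ((Finset.filter_subset _ _).trans sdiff_subset) (subset_free_left_of_mem hπ hk),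
      hπ.induced ((Finset.filter_subset _ _).trans sdiff_subset) (subset_free_right_of_mem hπ hk)⟩
  · rintro ⟨ρ, k, σl, σr⟩ ⟨hρ, hk, hst, hσl, hσr⟩
    exact ⟨isMatchingOn_glue hρ hk hst hσl hσr, by simp [DCPinv, glue]⟩
end

section
/- If π ∈ B(2n+1), i.e. π is an incomplete matching of [2n+1] in which n+1 is a singleton and each k ∈ {1,...,n} is paired with some element of {n+2,...,2n+1}, then the total crossing number satisfies Cr(π) ≥ n(n+1)/2. -/
open scoped Classical

/-- The total crossing number of an incomplete matching:
`Cr(π) = Σ_{{i,j}∈p(π)} |{singletons k : i<k<j}| + 2·|{(U,V): V<U nested}|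
  + |{({i,j},{k,l}) : i<k<j<l}|`. -/
noncomputable def Cr (π : Finset (Finset ℕ)) : ℕ :=
  (∑ V ∈ pairsOf π, ((singsOf π).filter (fun k => lo V < k ∧ k < hi V)).card)
    + 2 * (((pairsOf π) ×ˢ (pairsOf π)).filter
        (fun q => lo q.2 < lo q.1 ∧ hi q.1 < hi q.2)).card
    + (((pairsOf π) ×ˢ (pairsOf π)).filter
        (fun q => lo q.1 < lo q.2 ∧ lo q.2 < hi q.1 ∧ hi q.1 < hi q.2)).card

/-!
The `n` pairs `{k, j}` with `k ≤ n < n + 1 < j` all straddle the singleton `n + 1`, which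
contributes `1` per pair to the singleton term of `Cr`. Any two of these arcs overlap, and their ends
are distinct because the blocks are disjoint, so each of the `n.choose 2` unordered pairs of arcs is
nested or crossing and contributes at least `1`. Hence `Cr π ≥ n + n.choose 2 = n (n + 1) / 2`.
-/

open Finset

lemma lo_pair (a b : ℕ) : lo {a, b} = min a b := by
  rw [lo, min_insert, min_singleton, ← WithTop.coe_min, WithTop.untopD_coe]

lemma hi_pair (a b : ℕ) : hi {a, b} = max a b := by
  rw [hi, max_insert, max_singleton, ← WithBot.coe_max, WithBot.unbotD_coe]

lemma nonempty_of_mem_pairsOf {π : Finset (Finset ℕ)} {V : Finset ℕ} (hV : V ∈ pairsOf π) :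
    V.Nonempty :=
  card_pos.1 ((mem_filter.1 hV).2 ▸ two_pos)

lemma injOn_of_apply_mem {π : Finset (Finset ℕ)} (hπ : (π : Set (Finset ℕ)).PairwiseDisjoint id)
    {P : Finset (Finset ℕ)} (hP : P ⊆ π) (g : Finset ℕ → ℕ) (hg : ∀ V ∈ P, g V ∈ V) :
    Set.InjOn g P := fun U hU V hV hUV =>
  hπ.elim_finset (hP hU) (hP hV) (g U) (hg U hU) (hUV ▸ hg V hV)

lemma card_offDiag_filter_lt {α β : Type*} [LinearOrder β] (s : Finset α) (f : α → β)
    (hf : Set.InjOn f s) : (s.offDiag.filter (fun q => f q.1 < f q.2)).card = s.card.choose 2 := by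
  have hswap : (s.offDiag.filter (fun q => f q.1 < f q.2)).card
      = (s.offDiag.filter (fun q => ¬ f q.1 < f q.2)).card := by
    refine card_nbij' Prod.swap Prod.swap ?_ ?_ (fun q _ => q.swap_swap) (fun q _ => q.swap_swap)
    · intro q hq
      simp only [coe_filter, mem_offDiag, Set.mem_ofPred_eq] at hq ⊢
      exact ⟨⟨hq.1.2.1, hq.1.1, hq.1.2.2.symm⟩, hq.2.not_gt⟩
    · intro q hq
      simp only [coe_filter, mem_offDiag, Set.mem_ofPred_eq, not_lt] at hq ⊢
      exact ⟨⟨hq.1.2.1, hq.1.1, hq.1.2.2.symm⟩,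
        hq.2.lt_of_ne (hf.ne hq.1.2.1 hq.1.1 hq.1.2.2.symm)⟩
  have htotal := card_filter_add_card_filter_not (s := s.offDiag) (fun q => f q.1 < f q.2)
  rw [offDiag_card, ← hswap] at htotal
  rw [Nat.choose_two_right, Nat.mul_sub_one, ← htotal]
  omega

noncomputable def nestings (P : Finset (Finset ℕ)) : Finset (Finset ℕ × Finset ℕ) :=
  (P ×ˢ P).filter (fun q => lo q.2 < lo q.1 ∧ hi q.1 < hi q.2)

noncomputable def crossings (P : Finset (Finset ℕ)) : Finset (Finset ℕ × Finset ℕ) :=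
  (P ×ˢ P).filter (fun q => lo q.1 < lo q.2 ∧ lo q.2 < hi q.1 ∧ hi q.1 < hi q.2)

lemma Cr_eq (π : Finset (Finset ℕ)) :
    Cr π = (∑ V ∈ pairsOf π, ((singsOf π).filter (fun k => lo V < k ∧ k < hi V)).card)
      + 2 * (nestings (pairsOf π)).card + (crossings (pairsOf π)).card :=
  rfl

lemma nestings_mono {P Q : Finset (Finset ℕ)} (h : P ⊆ Q) : nestings P ⊆ nestings Q :=
  filter_subset_filter _ (product_subset_product h h)

lemma crossings_mono {P Q : Finset (Finset ℕ)} (h : P ⊆ Q) : crossings P ⊆ crossings Q :=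
  filter_subset_filter _ (product_subset_product h h)

/-- Arcs whose spans all contain `m` pairwise overlap, so with distinct ends every two of them are
either nested or crossing. -/
lemma choose_two_le_card_nestings_add_card_crossings {P : Finset (Finset ℕ)} {m : ℕ}
    (hlo : Set.InjOn lo P) (hhi : Set.InjOn hi P) (hm : ∀ V ∈ P, lo V < m ∧ m < hi V) :
    P.card.choose 2 ≤ (nestings P).card + (crossings P).card := by
  have hsub : P.offDiag.filter (fun q => lo q.1 < lo q.2) ⊆
      (nestings P).image Prod.swap ∪ crossings P := by
    intro q hq
    obtain ⟨⟨h1, h2, hne⟩, hlt⟩ := by simpa only [mem_filter, mem_offDiag] using hq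
    rcases lt_or_gt_of_ne (hhi.ne h1 h2 hne) with hhi12 | hhi21
    · exact mem_union_right _ (mem_filter.2
        ⟨mem_product.2 ⟨h1, h2⟩, hlt, (hm q.2 h2).1.trans (hm q.1 h1).2, hhi12⟩)
    · exact mem_union_left _ (mem_image.2
        ⟨q.swap, mem_filter.2 ⟨mem_product.2 ⟨h2, h1⟩, hlt, hhi21⟩, q.swap_swap⟩)
  calc P.card.choose 2 = (P.offDiag.filter (fun q => lo q.1 < lo q.2)).card :=
        (card_offDiag_filter_lt P lo hlo).symm
    _ ≤ ((nestings P).image Prod.swap ∪ crossings P).card := card_le_card hsub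
    _ ≤ (nestings P).card + (crossings P).card := by
        rw [← card_image_of_injective (nestings P) Prod.swap_injective]
        exact card_union_le _ _

lemma card_le_sum_card_singletons_between {π P : Finset (Finset ℕ)} {m : ℕ}
    (hP : P ⊆ pairsOf π) (hm : m ∈ singsOf π) (hsep : ∀ V ∈ P, lo V < m ∧ m < hi V) :
    P.card ≤ ∑ V ∈ pairsOf π, ((singsOf π).filter (fun k => lo V < k ∧ k < hi V)).card :=
  calc P.card = ∑ _ ∈ P, 1 := card_eq_sum_ones P
    _ ≤ ∑ V ∈ P, ((singsOf π).filter (fun k => lo V < k ∧ k < hi V)).card :=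
        sum_le_sum fun V hV => card_pos.2 ⟨m, mem_filter.2 ⟨hm, hsep V hV⟩⟩
    _ ≤ _ := sum_le_sum_of_subset hP

lemma card_add_choose_two_le_Cr {π P : Finset (Finset ℕ)} {m : ℕ}
    (hπ : (π : Set (Finset ℕ)).PairwiseDisjoint id) (hP : P ⊆ pairsOf π) (hm : m ∈ singsOf π)
    (hsep : ∀ V ∈ P, lo V < m ∧ m < hi V) :
    P.card + P.card.choose 2 ≤ Cr π := by
  have hPπ : P ⊆ π := hP.trans (filter_subset _ _)
  have hlo := injOn_of_apply_mem hπ hPπ lo fun V hV => lo_mem (nonempty_of_mem_pairsOf (hP hV))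
  have hhi := injOn_of_apply_mem hπ hPπ hi fun V hV => hi_mem (nonempty_of_mem_pairsOf (hP hV))
  have hsings := card_le_sum_card_singletons_between hP hm hsep
  have hpairs := choose_two_le_card_nestings_add_card_crossings hlo hhi hsep
  have hnest := card_le_card (nestings_mono hP)
  have hcross := card_le_card (crossings_mono hP)
  rw [Cr_eq]
  omega

/-- If `π ∈ B(2n+1)`, i.e. `π` is an incomplete matching of `[2n+1]` in which `n+1` is a
singleton and each `k ∈ {1,…,n}` is paired with some element of `{n+2,…,2n+1}`, then
`Cr(π) ≥ n(n+1)/2`. -/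
theorem crossing_bound_B (n : ℕ) (π : Finset (Finset ℕ))
    (hπ : IsIM (2 * n + 1) π)
    (hsing : ({n + 1} : Finset ℕ) ∈ π)
    (hpair : ∀ k ∈ Finset.Icc 1 n, ∃ j ∈ Finset.Icc (n + 2) (2 * n + 1),
      ({k, j} : Finset ℕ) ∈ π) :
    n * (n + 1) / 2 ≤ Cr π := by
  set P := (pairsOf π).filter (fun V => lo V < n + 1 ∧ n + 1 < hi V)
  have hcard : n ≤ P.card := by
    have hsurj : Set.SurjOn lo P (Icc 1 n) := by
      intro k hk
      obtain ⟨j, hj, hkj⟩ := hpair k hk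
      rw [mem_coe, mem_Icc] at hk
      rw [mem_Icc] at hj
      refine ⟨{k, j}, mem_filter.2 ⟨mem_filter.2 ⟨hkj, card_pair (by omega)⟩, ?_⟩, ?_⟩ <;>
        simp only [lo_pair, hi_pair] <;> omega
    simpa using card_le_card_of_surjOn lo hsurj
  have hm : n + 1 ∈ singsOf π :=
    mem_biUnion.2 ⟨_, mem_filter.2 ⟨hsing, card_singleton _⟩, mem_singleton_self _⟩
  calc n * (n + 1) / 2 = (n + 1).choose 2 := by
        rw [Nat.choose_two_right, Nat.add_sub_cancel, mul_comm]
    _ ≤ (P.card + 1).choose 2 := Nat.choose_le_choose 2 (by omega)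
    _ = P.card + P.card.choose 2 := by simp [Nat.choose_succ_succ']
    _ ≤ Cr π := card_add_choose_two_le_Cr (fun B hB C hC => hπ.2.1 B hB C hC)
        (filter_subset _ _) hm fun V hV => (mem_filter.1 hV).2
end

section
/- Let T ∈ B(H⊗H) be braided (T₁T₂T₁=T₂T₁T₂) and satisfy the crossing identity C₁T₂ = C₂T₁ on H^{⊗3}. Then for all k ≥ 1: C₁ T_{2,k+1} C_{k+1} T_{k+2} = C_k C₁ T_{2,k+2}, where T_{i,j} := T_i T_{i+1} ⋯ T_{j−1} (identity if j ≤ i) and C_i is the i-th contraction operator. -/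
/-- `Tprod T a b = T_a T_{a+1} ⋯ T_{b-1}` (the identity if `b ≤ a`). -/
noncomputable def Tprod {F : Type*} [NormedAddCommGroup F] [InnerProductSpace ℂ F]
    (T : ℕ → F →L[ℂ] F) (a b : ℕ) : F →L[ℂ] F :=
  ((List.range' a (b - a)).map T).prod

/-- Let `T` be a braided twist and `C_i` the contraction operators on the tensor
powers of a finite-dimensional Hilbert space (so the `T_i`, `C_i` satisfy the
structural relations `T_s C_t = C_t T_{s+2}` for `s ≥ t`, `T_s C_t = C_t T_s` for
`s ≤ t−2`, `C_k C_1 = C_1 C_{k+2}`, the braid relations, and distant commutation),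
and suppose `T` is crossing symmetric: `C_k T_{k+1} = C_{k+1} T_k`. Then for all
`k ≥ 1`: `C₁ T_{2,k+1} C_{k+1} T_{k+2} = C_k C₁ T_{2,k+2}`. -/
theorem contraction_twist_relation_b {F : Type*} [NormedAddCommGroup F]
    [InnerProductSpace ℂ F] [CompleteSpace F]
    (C T : ℕ → F →L[ℂ] F)
    (hbraid : ∀ k, 1 ≤ k → T k * T (k + 1) * T k = T (k + 1) * T k * T (k + 1))
    (hTcomm : ∀ i j, 1 ≤ i → i + 2 ≤ j → T i * T j = T j * T i)
    (hcross : ∀ k, 1 ≤ k → C k * T (k + 1) = C (k + 1) * T k)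
    (hTC1 : ∀ s t, 1 ≤ t → t ≤ s → T s * C t = C t * T (s + 2))
    (hTC2 : ∀ s t, 1 ≤ s → s + 2 ≤ t → T s * C t = C t * T s)
    (hCC : ∀ k, 1 ≤ k → C k * C 1 = C 1 * C (k + 2))
    (k : ℕ) (hk : 1 ≤ k) :
    C 1 * Tprod T 2 (k + 1) * C (k + 1) * T (k + 2) =
      C k * C 1 * Tprod T 2 (k + 2) := by
  have key : ∀ n a, (∀ j, a ≤ j → j < a + n → 1 ≤ j ∧ j + 2 ≤ k + 2) →
      ((List.range' a n).map T).prod * C (k+2) = C (k+2) * ((List.range' a n).map T).prod := by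
    intro n
    induction n with
    | zero => intro a _; simp
    | succ m ih =>
      intro a h
      rw [List.range'_succ, List.map_cons, List.prod_cons]
      have h1 := h a (le_refl a) (by omega)
      rw [mul_assoc, ih (a+1) (fun j hj hj2 => h j (by omega) (by omega)), ← mul_assoc,
        hTC2 a (k+2) h1.1 h1.2, mul_assoc]
  have hcomm : Tprod T 2 (k+1) * C (k+2) = C (k+2) * Tprod T 2 (k+1) := by
    unfold Tprod
    exact key (k+1-2) 2 (fun j hj hj2 => ⟨by omega, by omega⟩)
  have hsplit : Tprod T 2 (k+2) = Tprod T 2 (k+1) * T (k+1) := by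
    unfold Tprod
    have h2 : k + 2 - 2 = (k + 1 - 2) + 1 := by omega
    rw [h2, List.range'_concat, List.map_append, List.prod_append]
    simp only [List.map_cons, List.map_nil, List.prod_cons, List.prod_nil, mul_one]
    congr 2
    omega
  rw [mul_assoc, hcross (k+1) (by omega), ← mul_assoc, mul_assoc (C 1), hcomm,
    ← mul_assoc, mul_assoc, ← hsplit, hCC k hk]
end

section
/- Recurrence for twisted contractions, paired case: if n ≥ 3 and π ∈ P_{1,2}(n) has 1 paired with j = j₁^π, then W^T_π = W^T_{d_p(π)} ∘ C₁ T_{2,j}, where d_p(π) ∈ P_{1,2}(n−2) is obtained by deleting {1,j} and relabeling, and T_{2,j} = T₂⋯T_{j−1}. -/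
open scoped Classical

/-- `rcount done m`: number of endpoints of the already-processed pairings `done`
that are `< m`. -/
def rcount (done : List (ℕ × ℕ)) (m : ℕ) : ℕ :=
  (done.map (fun p => (if p.1 < m then 1 else 0) + (if p.2 < m then 1 else 0))).sum

/-- The twisted contraction word associated to a list of pairings. -/
noncomputable def Wlist {F : Type*} [NormedAddCommGroup F] [InnerProductSpace ℂ F]
    (C T : ℕ → F →L[ℂ] F) : List (ℕ × ℕ) → List (ℕ × ℕ) → (F →L[ℂ] F)
  | _, [] => 1
  | done, p :: rest =>
      Wlist C T (p :: done) rest *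
        (C (p.1 - rcount done p.1) *
          Tprod T (p.1 - rcount done p.1 + 1) (p.2 - rcount done p.2))

/-!
Processing the pair `(1, j)` first shifts every later index `m` down by the number of
endpoints of `(1, j)` below `m`, which is exactly the order-preserving relabelling of
`[n] \ {1, j}`. Since `Wlist` sees the processed pairs only through `rcount`, which is
invariant under permuting them and under a strictly monotone relabelling of all indices,
`(1, j)` can be moved to the bottom of the list of processed pairs and then deleted.
-/

lemma rcount_cons (p : ℕ × ℕ) (d : List (ℕ × ℕ)) (m : ℕ) :
    rcount (p :: d) m = rcount [p] m + rcount d m := by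
  simp [rcount]

lemma rcount_perm {d₁ d₂ : List (ℕ × ℕ)} (h : d₁.Perm d₂) : rcount d₁ = rcount d₂ :=
  funext fun _ => (h.map _).sum_eq

lemma rcount_map_of_strictMonoOn {f : ℕ → ℕ} {s : Set ℕ} (hf : StrictMonoOn f s)
    {m : ℕ} (hm : m ∈ s) (d : List (ℕ × ℕ)) (hd : ∀ p ∈ d, p.1 ∈ s ∧ p.2 ∈ s) :
    rcount (d.map (Prod.map f f)) (f m) = rcount d m := by
  induction d with
  | nil => rfl
  | cons p d ih =>
    obtain ⟨hp₁, hp₂⟩ := hd p List.mem_cons_self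
    rw [List.map_cons, rcount_cons, rcount_cons, ih fun q hq => hd q (List.mem_cons_of_mem _ hq)]
    simp [rcount, hf.lt_iff_lt hp₁ hm, hf.lt_iff_lt hp₂ hm]

section Wlist

variable {F : Type*} [NormedAddCommGroup F] [InnerProductSpace ℂ F] (C T : ℕ → F →L[ℂ] F)

lemma Wlist_perm (rest : List (ℕ × ℕ)) {d₁ d₂ : List (ℕ × ℕ)} (h : d₁.Perm d₂) :
    Wlist C T d₁ rest = Wlist C T d₂ rest := by
  induction rest generalizing d₁ d₂ with
  | nil => rfl
  | cons p rest ih => simp only [Wlist, rcount_perm h, ih (h.cons p)]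

lemma Wlist_cons_eq_map {e : ℕ × ℕ} {f : ℕ → ℕ} {s : Set ℕ} (hf : StrictMonoOn f s)
    (hfe : ∀ m ∈ s, f m = m - rcount [e] m) (done rest : List (ℕ × ℕ))
    (hdone : ∀ p ∈ done, p.1 ∈ s ∧ p.2 ∈ s) (hrest : ∀ p ∈ rest, p.1 ∈ s ∧ p.2 ∈ s) :
    Wlist C T (e :: done) rest
      = Wlist C T (done.map (Prod.map f f)) (rest.map (Prod.map f f)) := by
  induction rest generalizing done with
  | nil => rfl
  | cons p rest ih =>
    obtain ⟨hp₁, hp₂⟩ := hrest p List.mem_cons_self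
    have shift : ∀ m ∈ s, m - rcount (e :: done) m
        = f m - rcount (done.map (Prod.map f f)) (f m) := fun m hm => by
      rw [rcount_cons, rcount_map_of_strictMonoOn hf hm done hdone, hfe m hm, Nat.sub_sub]
    calc Wlist C T (e :: done) (p :: rest)
        = Wlist C T (e :: p :: done) rest *
            (C (p.1 - rcount (e :: done) p.1) *
              Tprod T (p.1 - rcount (e :: done) p.1 + 1) (p.2 - rcount (e :: done) p.2)) := by
          rw [Wlist, Wlist_perm C T rest (List.Perm.swap e p done)]
      _ = _ := by
          rw [ih (p :: done) (List.forall_mem_cons.2 ⟨⟨hp₁, hp₂⟩, hdone⟩)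
              fun q hq => hrest q (List.mem_cons_of_mem _ hq),
            shift p.1 hp₁, shift p.2 hp₂]
          rfl

end Wlist

/-- The order-preserving relabelling `[n] \ {1, j} → [n - 2]`. -/
def relabel (j m : ℕ) : ℕ := if m < j then m - 1 else m - 2

lemma relabel_strictMonoOn {j : ℕ} : StrictMonoOn (relabel j) {m | 1 < m ∧ m ≠ j} := by
  intro a ha b hb hab
  simp only [Set.mem_ofPred_eq] at ha hb
  unfold relabel
  split_ifs <;> omega

lemma relabel_eq_sub_rcount {j m : ℕ} (hj : 2 ≤ j) (hm : m ∈ {m | 1 < m ∧ m ≠ j}) :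
    relabel j m = m - rcount [(1, j)] m := by
  simp only [Set.mem_ofPred_eq] at hm
  simp only [relabel, rcount, List.map_cons, List.map_nil, List.sum_cons, List.sum_nil]
  split_ifs <;> omega

lemma ne_of_pairwise_disjoint {π : Finset (Finset ℕ)}
    (hπ : ∀ B ∈ π, ∀ C ∈ π, B ≠ C → Disjoint B C) {j a b : ℕ} (hj : {1, j} ∈ π)
    (hab : {a, b} ∈ π) (ha : 1 < a) (hlt : a < b) : a ≠ j ∧ b ≠ j := by
  have hne : ({a, b} : Finset ℕ) ≠ {1, j} := fun h => by
    have : 1 ∈ ({a, b} : Finset ℕ) := h ▸ Finset.mem_insert_self 1 {j}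
    simp only [Finset.mem_insert, Finset.mem_singleton] at this
    omega
  have hdisj := hπ _ hab _ hj hne
  constructor <;> rintro rfl
  · exact Finset.disjoint_left.1 hdisj (Finset.mem_insert_self a {b}) (by simp)
  · exact Finset.disjoint_left.1 hdisj (by simp : b ∈ ({a, b} : Finset ℕ)) (by simp)

theorem W_paired_recurrence_general {F : Type*} [NormedAddCommGroup F]
    [InnerProductSpace ℂ F]
    (C T : ℕ → F →L[ℂ] F)
    (n : ℕ) (π : Finset (Finset ℕ))
    (hπ : IsIM n π) (j : ℕ) (hj : ({1, j} : Finset ℕ) ∈ π) (hj2 : 2 ≤ j)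
    (rest : List (ℕ × ℕ))
    (hL : ∀ p : ℕ × ℕ,
      p ∈ ((1, j) :: rest) ↔ (({p.1, p.2} : Finset ℕ) ∈ π ∧ p.1 < p.2))
    (hsort : ((1, j) :: rest).Pairwise (fun p q => p.1 < q.1)) :
    Wlist C T [] ((1, j) :: rest) =
      Wlist C T []
          (rest.map (fun p =>
            (if p.1 < j then p.1 - 1 else p.1 - 2,
             if p.2 < j then p.2 - 1 else p.2 - 2))) *
        (C 1 * Tprod T 2 j) := by
  have hrest : ∀ q ∈ rest, q.1 ∈ {m | 1 < m ∧ m ≠ j} ∧ q.2 ∈ {m | 1 < m ∧ m ≠ j} := by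
    intro q hq
    obtain ⟨hqπ, hlt⟩ := (hL q).1 (List.mem_cons_of_mem _ hq)
    have h1 : 1 < q.1 := List.rel_of_pairwise_cons hsort hq
    obtain ⟨hne₁, hne₂⟩ := ne_of_pairwise_disjoint hπ.2.1 hj hqπ h1 hlt
    exact ⟨⟨h1, hne₁⟩, ⟨by omega, hne₂⟩⟩
  calc Wlist C T [] ((1, j) :: rest) = Wlist C T [(1, j)] rest * (C 1 * Tprod T 2 j) := by
        simp [Wlist, rcount]
    _ = _ := by
        rw [Wlist_cons_eq_map C T relabel_strictMonoOn (fun _ => relabel_eq_sub_rcount hj2)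
          [] rest (by simp) hrest]
        rfl

/-- Paired recurrence for twisted contractions: if `n ≥ 3` and `π ∈ P₁,₂(n)` has `1`
paired with `j = j₁^π`, then `W^T_π = W^T_{d_p(π)} ∘ C₁ T_{2,j}`, where `d_p(π)` is
obtained by deleting `{1,j}` and relabeling `[n] \ {1,j}` order-preservingly
(`m ↦ m−1` if `m < j`, `m ↦ m−2` if `m > j`).  The pairings of `π` in the left
standard order are `(1,j)` followed by `rest`. -/
theorem W_paired_recurrence {F : Type*} [NormedAddCommGroup F]
    [InnerProductSpace ℂ F] [CompleteSpace F]
    (C T : ℕ → F →L[ℂ] F)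
    (n : ℕ) (hn : 3 ≤ n) (π : Finset (Finset ℕ))
    (hπ : IsIM n π) (j : ℕ) (hj : ({1, j} : Finset ℕ) ∈ π) (hj2 : 2 ≤ j)
    (rest : List (ℕ × ℕ))
    (hL : ∀ p : ℕ × ℕ,
      p ∈ ((1, j) :: rest) ↔ (({p.1, p.2} : Finset ℕ) ∈ π ∧ p.1 < p.2))
    (hnd : ((1, j) :: rest).Nodup)
    (hsort : ((1, j) :: rest).Pairwise (fun p q => p.1 < q.1)) :
    Wlist C T [] ((1, j) :: rest) =
      Wlist C T []
          (rest.map (fun p =>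
            (if p.1 < j then p.1 - 1 else p.1 - 2,
             if p.2 < j then p.2 - 1 else p.2 - 2))) *
        (C 1 * Tprod T 2 j) :=
  W_paired_recurrence_general C T n π hπ j hj hj2 rest hL hsort
end

section
/- For a twist T with ‖T‖ < 1 and Λ_T(A) the induced preservation operator on the T-twisted Fock space, Λ_T(A*) = Λ_T(A)*: for all Φ_n, Ψ_n ∈ H^{⊗n}, ⟨Ψ_n, P_{T,n} Λ(A) R_{T,n} Φ_n⟩ = ⟨Λ(A*) R_{T,n} Ψ_n, P_{T,n} Φ_n⟩. -/
/- Notation of the paper: `R = R_{T,n}`, `Q = 1 ⊗ P_{T,n−1}`, `Q * R = P_{T,n}`,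
`Lam = Λ(A)`, `Lam' = Λ(A*)`. -/
theorem preservation_operator_adjoint_general
    {E : Type*} [NormedAddCommGroup E] [InnerProductSpace ℂ E] [CompleteSpace E]
    (R Q Lam Lam' : E →L[ℂ] E)
    (hQ : Q.IsPositive)
    (hP : IsSelfAdjoint (Q * R))
    (hadj : ContinuousLinearMap.adjoint Lam = Lam')
    (hcomm : Lam * Q = Q * Lam) :
    ∀ Φn Ψn : E,
      (inner ℂ Ψn ((Q * R) (Lam (R Φn))) : ℂ) =
        (inner ℂ (Lam' (R Ψn)) ((Q * R) Φn) : ℂ) := by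
  intro Φn Ψn
  calc inner ℂ Ψn ((Q * R) (Lam (R Φn)))
      = inner ℂ (Q (R Ψn)) (Lam (R Φn)) := (hP.isSymmetric _ _).symm
    _ = inner ℂ (R Ψn) (Q (Lam (R Φn))) := hQ.inner_left_eq_inner_right _ _
    _ = inner ℂ (R Ψn) (Lam ((Q * R) Φn)) :=
      congrArg (inner ℂ (R Ψn)) (DFunLike.congr_fun hcomm (R Φn)).symm
    _ = inner ℂ (Lam' (R Ψn)) ((Q * R) Φn) := by
      rw [← hadj, ContinuousLinearMap.adjoint_inner_left]

/-- **The adjoint of the preservation operator.**  Model of level `n` of the twisted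
Fock space: `E = H^{⊗n}`, `R = R_{T,n}`, `Q = 1 ⊗ P_{T,n−1} ≥ 0`, `P_{T,n} = Q·R`
self-adjoint; `Lam = Λ(A)` and `Lam' = Λ(A*) = Λ(A)*` act on the first tensor factor
and hence commute with `Q`.  Then `Λ_T(A*) = Λ_T(A)*` with respect to the twisted
inner product: for all `Φₙ, Ψₙ ∈ H^{⊗n}`,
`⟨Ψₙ, P_{T,n} Λ(A) R_{T,n} Φₙ⟩ = ⟨Λ(A*) R_{T,n} Ψₙ, P_{T,n} Φₙ⟩`. -/
theorem preservation_operator_adjoint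
    {E : Type*} [NormedAddCommGroup E] [InnerProductSpace ℂ E] [CompleteSpace E]
    (R Q Lam Lam' : E →L[ℂ] E)
    (hQ : Q.IsPositive)
    (hP : IsSelfAdjoint (Q * R))
    (hadj : ContinuousLinearMap.adjoint Lam = Lam')
    (hcomm : Lam * Q = Q * Lam)
    (hcomm' : Lam' * Q = Q * Lam') :
    ∀ Φn Ψn : E,
      (inner ℂ Ψn ((Q * R) (Lam (R Φn))) : ℂ) =
        (inner ℂ (Lam' (R Ψn)) ((Q * R) Φn) : ℂ) :=
  preservation_operator_adjoint_general R Q Lam Lam' hQ hP hadj hcomm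
end
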